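/- arXiv:1502.03621 — 3 statements merged into one kernel-verified Lean document; each statement's English description precedes it below -/
import Mathlib

section
/- If every function from Cantor space to ℕ is continuous, then for each such φ there exists a point g in Cantor space at which φ attains its maximum value, i.e. φ(g) ≥ φ(f) for all f; moreover g can be chosen of the form σ extended by zeros for some finite binary string σ. -/
/-! A continuous `φ : (ℕ → Bool) → ℕ` attains its maximum at some `g` because Cantor space is
compact. Since `ℕ` is discrete, `φ` is also constant near `g`, and the first `n` values of `g`
followed by zeros converge to `g` as `n → ∞`; so for large `n` this finite-support point is again
a maximiser. -/

open Filter Topology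

theorem List.getD_ofFn_of_lt {α : Type*} (g : ℕ → α) (d : α) {n i : ℕ} (hi : i < n) :
    (List.ofFn fun j : Fin n => g j).getD i d = g i := by
  simp [hi]

theorem tendsto_getD_ofFn_atTop {α : Type*} [TopologicalSpace α] (g : ℕ → α) (d : α) :
    Tendsto (fun n i => (List.ofFn fun j : Fin n => g j).getD i d) atTop (𝓝 g) := by
  refine tendsto_pi_nhds.2 fun i => tendsto_nhds_of_eventually_eq ?_
  filter_upwards [eventually_gt_atTop i] with n hn using List.getD_ofFn_of_lt g d hn

theorem stmt_1 (hcont : ∀ φ : (ℕ → Bool) → ℕ, Continuous φ)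
    (φ : (ℕ → Bool) → ℕ) :
    ∃ σ : List Bool, ∀ f : ℕ → Bool, φ f ≤ φ (fun i => σ.getD i false) := by
  obtain ⟨g, -, hg⟩ :=
    isCompact_univ.exists_isMaxOn Set.univ_nonempty (hcont φ).continuousOn
  have hφ : ∀ᶠ n in atTop, φ (fun i => (List.ofFn fun j : Fin n => g j).getD i false) = φ g := by
    simpa [nhds_discrete] using ((hcont φ).tendsto g).comp (tendsto_getD_ofFn_atTop g false)
  obtain ⟨n, hn⟩ := hφ.exists
  exact ⟨List.ofFn fun j : Fin n => g j, fun f => hn ▸ hg (Set.mem_univ f)⟩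
end

section
/- Continuous fan theorem: if A ⊆ Cantor × ℕ is such that {α : A(α,x)} is open for every x, and for every α in Cantor space there exists x with A(α, x), then there exists y such that for every α there exists x such that every β agreeing with α on the first y values satisfies A(β, x). -/
/-!
For each `n`, the points `α` admitting a witness `x` that works on the whole cylinder of length `n`
around `α` form an open set, and these sets increase with `n`. Since every `{α | A α x}` is open,
each `α` lies in one of them, so they form a directed open cover of the compact product space,
and a single one of them is already everything.
-/

open PiNat Set

namespace PiNat

variable {E : ℕ → Type*}

def uniformlyWitnessed (A : (∀ n, E n) → ℕ → Prop) (n : ℕ) : Set (∀ n, E n) :=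
  {α | ∃ x, ∀ β ∈ cylinder α n, A β x}

variable {A : (∀ n, E n) → ℕ → Prop}

theorem monotone_uniformlyWitnessed : Monotone (uniformlyWitnessed A) :=
  fun _ _ hmn _ ⟨x, hx⟩ => ⟨x, fun β hβ => hx β (cylinder_anti _ hmn hβ)⟩

variable [∀ n, TopologicalSpace (E n)] [∀ n, DiscreteTopology (E n)]

theorem isOpen_uniformlyWitnessed (n : ℕ) : IsOpen (uniformlyWitnessed A n) := by
  refine isOpen_iff_forall_mem_open.2 fun α ⟨x, hx⟩ =>
    ⟨cylinder α n, fun γ hγ => ⟨x, ?_⟩, isOpen_cylinder E α n, self_mem_cylinder α n⟩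
  rwa [mem_cylinder_iff_eq.1 hγ]

theorem iUnion_uniformlyWitnessed (hopen : ∀ x, IsOpen {α | A α x}) (htot : ∀ α, ∃ x, A α x) :
    ⋃ n, uniformlyWitnessed A n = univ := by
  refine eq_univ_of_forall fun α => ?_
  obtain ⟨x, hx⟩ := htot α
  obtain ⟨-, ⟨γ, n, rfl⟩, hαγ, hγA⟩ :=
    (isTopologicalBasis_cylinders E).exists_subset_of_mem_open hx (hopen x)
  rw [← mem_cylinder_iff_eq.1 hαγ] at hγA
  exact mem_iUnion.2 ⟨n, x, hγA⟩

theorem exists_uniformlyWitnessed_eq_univ [∀ n, CompactSpace (E n)]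
    (hopen : ∀ x, IsOpen {α | A α x}) (htot : ∀ α, ∃ x, A α x) :
    ∃ n, uniformlyWitnessed A n = univ := by
  obtain ⟨n, hn⟩ := isCompact_univ.elim_directed_cover (uniformlyWitnessed A)
    isOpen_uniformlyWitnessed (iUnion_uniformlyWitnessed hopen htot).ge
    monotone_uniformlyWitnessed.directed_le
  exact ⟨n, univ_subset_iff.1 hn⟩

end PiNat

theorem stmt_4 (A : (ℕ → Bool) → ℕ → Prop)
    (hopen : ∀ x : ℕ, IsOpen {α : ℕ → Bool | A α x})
    (htot : ∀ α : ℕ → Bool, ∃ x : ℕ, A α x) :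
    ∃ y : ℕ, ∀ α : ℕ → Bool, ∃ x : ℕ,
      ∀ β : ℕ → Bool, (∀ i < y, α i = β i) → A β x := by
  obtain ⟨y, hy⟩ := exists_uniformlyWitnessed_eq_univ hopen htot
  refine ⟨y, fun α => ?_⟩
  obtain ⟨x, hx⟩ : α ∈ uniformlyWitnessed A y := hy ▸ mem_univ α
  exact ⟨x, fun β hβ => hx β fun i hi => (hβ i hi).symm⟩
end

section
/- Every continuous function φ : Cantor → ℕ has an associate: there is α : (List {0,1}) → ℕ such that (a) for every f in Cantor space there exists n with α(f↾n) > 0, and (b) whenever α(f↾n) > 0 and α(f↾k) = 0 for all k < n, then α(f↾n) = φ(f) + 1. -/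
/-!
Let `α s` be `φ f + 1` for any `f` extending `s` when `φ` is constant on the cylinder of
sequences extending `s`, and `0` otherwise. A continuous map into the discrete space `ℕ` is
constant on some cylinder around each point, which gives (a); and `α (f↾n) > 0` already says that
`φ` is constant on the cylinder of `f↾n`, which contains `f`, which gives (b).
-/

/-- The list of the first `n` values of `f`. -/
def restrict (f : ℕ → Bool) (n : ℕ) : List Bool := List.ofFn (fun i : Fin n => f i)

open PiNat

namespace PiNat

variable {E : ℕ → Type*} [∀ n, TopologicalSpace (E n)] [∀ n, DiscreteTopology (E n)]

theorem exists_cylinder_subset {U : Set (∀ n, E n)} (hU : IsOpen U) {x : ∀ n, E n}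
    (hx : x ∈ U) : ∃ n, cylinder x n ⊆ U := by
  obtain ⟨_, ⟨y, n, rfl⟩, hxy, hyU⟩ :=
    (isTopologicalBasis_cylinders E).exists_subset_of_mem_open hx hU
  exact ⟨n, mem_cylinder_iff_eq.1 hxy ▸ hyU⟩

theorem exists_cylinder_subset_fiber {Y : Type*} [TopologicalSpace Y] [DiscreteTopology Y]
    {φ : (∀ n, E n) → Y} (hφ : Continuous φ) (x : ∀ n, E n) :
    ∃ n, ∀ y ∈ cylinder x n, φ y = φ x :=
  exists_cylinder_subset ((isOpen_discrete {φ x}).preimage hφ) rfl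

end PiNat

lemma restrict_length (f : ℕ → Bool) (n : ℕ) : (restrict f n).length = n :=
  List.length_ofFn

def extendFalse (s : List Bool) : ℕ → Bool := fun i => s.getD i false

lemma extendFalse_restrict_mem_cylinder (f : ℕ → Bool) (n : ℕ) :
    extendFalse (restrict f n) ∈ cylinder f n := by
  intro i hi
  simp [extendFalse, restrict, hi]

lemma cylinder_extendFalse_restrict (f : ℕ → Bool) (n : ℕ) :
    cylinder (extendFalse (restrict f n)) (restrict f n).length = cylinder f n := by
  rw [restrict_length, mem_cylinder_iff_eq.1 (extendFalse_restrict_mem_cylinder f n)]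

open Classical in
noncomputable def associate (φ : (ℕ → Bool) → ℕ) (s : List Bool) : ℕ :=
  if ∀ g ∈ cylinder (extendFalse s) s.length, φ g = φ (extendFalse s)
  then φ (extendFalse s) + 1 else 0

section associate

variable {φ : (ℕ → Bool) → ℕ} {f : ℕ → Bool} {n : ℕ}

lemma associate_restrict_of_forall_mem_cylinder (h : ∀ g ∈ cylinder f n, φ g = φ f) :
    associate φ (restrict f n) = φ f + 1 := by
  have hext : φ (extendFalse (restrict f n)) = φ f := h _ (extendFalse_restrict_mem_cylinder f n)
  rw [associate, cylinder_extendFalse_restrict, hext, if_pos h]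

lemma associate_restrict_of_pos (h : 0 < associate φ (restrict f n)) :
    associate φ (restrict f n) = φ f + 1 := by
  rw [associate, cylinder_extendFalse_restrict] at h ⊢
  split_ifs at h ⊢ with hconst
  · rw [hconst f (self_mem_cylinder f n)]
  · exact absurd h (lt_irrefl 0)

end associate

theorem stmt_10 (φ : (ℕ → Bool) → ℕ) (hφ : Continuous φ) :
    ∃ α : List Bool → ℕ,
      (∀ f : ℕ → Bool, ∃ n : ℕ, 0 < α (restrict f n)) ∧
      (∀ (f : ℕ → Bool) (n : ℕ), 0 < α (restrict f n) →
        (∀ k < n, α (restrict f k) = 0) → α (restrict f n) = φ f + 1) := by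
  refine ⟨associate φ, fun f => ?_, fun f n hpos _ => associate_restrict_of_pos hpos⟩
  obtain ⟨n, hn⟩ := exists_cylinder_subset_fiber hφ f
  exact ⟨n, (associate_restrict_of_forall_mem_cylinder hn).symm ▸ Nat.succ_pos _⟩
end
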